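/- arXiv:2401.14096 — 9 statements merged into one kernel-verified Lean document; each statement's English description precedes it below -/
import Mathlib

section
/- The pair (Γ, Γ₊) is an ordered abelian group (i.e. Γ₊ + Γ₊ ⊆ Γ₊, Γ₊ ∩ (−Γ₊) = {0}, and Γ = Γ₊ − Γ₊) which is unperforated (for every integer n ≥ 1 and x ∈ Γ, if n·x ∈ Γ₊ then x ∈ Γ₊) and has the Riesz interpolation property (whenever x₁, x₂, y₁, y₂ ∈ Γ satisfy xᵢ ≤ yⱼ for all i, j ∈ {1,2}, there exists z ∈ Γ with xᵢ ≤ z ≤ yⱼ for all i, j). -/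
/-- The positive cone `Γ₊` on `Γ = H ⊕ G`: elements whose second component lies in
`G₊ \ {0}`, together with `0`. -/
def gammaPos (H : Type*) {G : Type*} (Gpos : Set G) [AddCommGroup H] [AddCommGroup G] :
    Set (H × G) :=
  {x : H × G | x.2 ∈ Gpos ∧ x.2 ≠ 0} ∪ {0}

/-- Lemma 3.1(i): `(Γ, Γ₊)` is an ordered abelian group which is unperforated and has
the Riesz interpolation property. -/
theorem stmt_1 {H G : Type*} [AddCommGroup H] [AddCommGroup G]
    (hH : ∀ g : H, g ≠ 0 → ¬IsOfFinAddOrder g)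
    (Gpos : Set G)
    (hGadd : ∀ a ∈ Gpos, ∀ b ∈ Gpos, a + b ∈ Gpos)
    (hGcap : Gpos ∩ (-Gpos) = {0})
    (hGunperf : ∀ n : ℕ, 1 ≤ n → ∀ g : G, n • g ∈ Gpos → g ∈ Gpos)
    (hGdir : ∀ g : G, ∃ a ∈ Gpos, ∃ b ∈ Gpos, g = a - b)
    (hGne : Gpos ≠ {0})
    (hGriesz : ∀ x₁ x₂ y₁ y₂ : G,
      y₁ - x₁ ∈ Gpos → y₁ - x₂ ∈ Gpos → y₂ - x₁ ∈ Gpos → y₂ - x₂ ∈ Gpos →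
      ∃ z : G, z - x₁ ∈ Gpos ∧ z - x₂ ∈ Gpos ∧ y₁ - z ∈ Gpos ∧ y₂ - z ∈ Gpos)
    (hGsriesz : ∀ x₁ x₂ y₁ y₂ : G,
      (y₁ - x₁ ∈ Gpos ∧ y₁ - x₁ ≠ 0) → (y₁ - x₂ ∈ Gpos ∧ y₁ - x₂ ≠ 0) →
      (y₂ - x₁ ∈ Gpos ∧ y₂ - x₁ ≠ 0) → (y₂ - x₂ ∈ Gpos ∧ y₂ - x₂ ≠ 0) →
      ∃ z : G, (z - x₁ ∈ Gpos ∧ z - x₁ ≠ 0) ∧ (z - x₂ ∈ Gpos ∧ z - x₂ ≠ 0) ∧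
        (y₁ - z ∈ Gpos ∧ y₁ - z ≠ 0) ∧ (y₂ - z ∈ Gpos ∧ y₂ - z ≠ 0)) :
    (∀ a ∈ gammaPos H Gpos, ∀ b ∈ gammaPos H Gpos, a + b ∈ gammaPos H Gpos) ∧
    gammaPos H Gpos ∩ (-(gammaPos H Gpos)) = {0} ∧
    (∀ x : H × G, ∃ a ∈ gammaPos H Gpos, ∃ b ∈ gammaPos H Gpos, x = a - b) ∧
    (∀ n : ℕ, 1 ≤ n → ∀ x : H × G, n • x ∈ gammaPos H Gpos → x ∈ gammaPos H Gpos) ∧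
    (∀ x₁ x₂ y₁ y₂ : H × G,
      y₁ - x₁ ∈ gammaPos H Gpos → y₁ - x₂ ∈ gammaPos H Gpos →
      y₂ - x₁ ∈ gammaPos H Gpos → y₂ - x₂ ∈ gammaPos H Gpos →
      ∃ z : H × G, z - x₁ ∈ gammaPos H Gpos ∧ z - x₂ ∈ gammaPos H Gpos ∧
        y₁ - z ∈ gammaPos H Gpos ∧ y₂ - z ∈ gammaPos H Gpos) := by

  have mem : ∀ x : H × G, x ∈ gammaPos H Gpos ↔ (x.2 ∈ Gpos ∧ x.2 ≠ 0) ∨ x = 0 := by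
    intro x
    simp [gammaPos, Set.mem_union, Set.mem_setOf_eq, Set.mem_singleton_iff]; tauto
  have h0G : (0 : G) ∈ Gpos := by
    have h : (0 : G) ∈ Gpos ∩ (-Gpos) := by rw [hGcap]; rfl
    exact h.1
  have hzero : ∀ g : G, g ∈ Gpos → -g ∈ Gpos → g = 0 := by
    intro g hg hng
    have h : g ∈ Gpos ∩ (-Gpos) := ⟨hg, by simpa using hng⟩
    rwa [hGcap, Set.mem_singleton_iff] at h
  have htfG : ∀ n : ℕ, 1 ≤ n → ∀ g : G, n • g = 0 → g = 0 := by
    intro n hn g h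
    apply hzero
    · exact hGunperf n hn g (h ▸ h0G)
    · exact hGunperf n hn (-g) (by rw [smul_neg, h, neg_zero]; exact h0G)
  have htfH : ∀ n : ℕ, 1 ≤ n → ∀ h : H, n • h = 0 → h = 0 := by
    intro n hn h he
    by_contra hne
    exact hH h hne (isOfFinAddOrder_iff_nsmul_eq_zero.mpr ⟨n, hn, he⟩)
  obtain ⟨p, hp, hpne⟩ : ∃ p ∈ Gpos, p ≠ 0 := by
    by_contra hc
    push_neg at hc
    apply hGne
    apply Set.Subset.antisymm
    · intro g hg; exact hc g hg
    · intro g hg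
      rw [Set.mem_singleton_iff] at hg
      rw [hg]; exact h0G
  refine ⟨?_, ?_, ?_, ?_, ?_⟩
  · -- addition
    intro a ha b hb
    rw [mem] at ha hb ⊢
    rcases ha with ⟨ha1, ha2⟩ | rfl
    · rcases hb with ⟨hb1, hb2⟩ | rfl
      · left
        refine ⟨hGadd _ ha1 _ hb1, ?_⟩
        intro h
        have h' : a.2 + b.2 = 0 := h
        have hna : -a.2 = b.2 := by
          rw [eq_neg_of_add_eq_zero_left h', neg_neg]
        exact ha2 (hzero _ ha1 (hna ▸ hb1))
      · left; simpa using ⟨ha1, ha2⟩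
    · rcases hb with ⟨hb1, hb2⟩ | rfl
      · left; simpa using ⟨hb1, hb2⟩
      · right; simp
  · -- cap
    ext x
    simp only [Set.mem_inter_iff, Set.mem_neg, Set.mem_singleton_iff]
    constructor
    · rintro ⟨hx, hnx⟩
      rw [mem] at hx hnx
      rcases hx with ⟨hx1, hx2⟩ | rfl
      · rcases hnx with ⟨hnx1, hnx2⟩ | h0
        · have : (-x).2 = -x.2 := rfl
          rw [this] at hnx1
          exact absurd (hzero _ hx1 hnx1) hx2
        · simpa using h0
      · rfl
    · rintro rfl
      constructor <;> (rw [mem]; right; simp)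
  · -- directed
    intro x
    obtain ⟨a, ha, b, hb, hab⟩ := hGdir x.2
    have hap : a + p ∈ Gpos := hGadd _ ha _ hp
    have hbp : b + p ∈ Gpos := hGadd _ hb _ hp
    have hapne : a + p ≠ 0 := by
      intro h
      have hpa : -p = a := by rw [eq_neg_of_add_eq_zero_right h, neg_neg]
      exact hpne (hzero _ hp (hpa ▸ ha))
    have hbpne : b + p ≠ 0 := by
      intro h
      have hpb : -p = b := by rw [eq_neg_of_add_eq_zero_right h, neg_neg]
      exact hpne (hzero _ hp (hpb ▸ hb))
    refine ⟨(x.1, a + p), ?_, ((0 : H), b + p), ?_, ?_⟩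
    · rw [mem]; left; exact ⟨hap, hapne⟩
    · rw [mem]; left; exact ⟨hbp, hbpne⟩
    · ext
      · simp
      · simp only [Prod.snd_sub]
        rw [hab]; abel
  · -- unperforated
    intro n hn x hx
    rw [mem] at hx ⊢
    rcases hx with ⟨h1, h2⟩ | h0
    · left
      have hsnd : (n • x).2 = n • x.2 := rfl
      rw [hsnd] at h1 h2
      refine ⟨hGunperf n hn _ h1, ?_⟩
      intro h
      exact h2 (by rw [h, smul_zero])
    · right
      have h1 : n • x.1 = 0 := congrArg Prod.fst h0
      have h2 : n • x.2 = 0 := congrArg Prod.snd h0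
      exact Prod.ext (htfH n hn _ h1) (htfG n hn _ h2)
  · -- Riesz interpolation
    intro x₁ x₂ y₁ y₂ h11 h12 h21 h22
    have memz : ∀ x : H × G, x = 0 → x ∈ gammaPos H Gpos := by
      intro x hx; rw [mem]; right; exact hx
    by_cases e11 : y₁ = x₁
    · refine ⟨y₁, memz _ (by rw [sub_eq_zero]; exact e11), h12,
        memz _ (sub_self _), ?_⟩
      rw [e11]; exact h21
    by_cases e12 : y₁ = x₂
    · exact ⟨y₁, h11, memz _ (by rw [sub_eq_zero]; exact e12),
        memz _ (sub_self _), by rw [e12]; exact h22⟩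
    by_cases e21 : y₂ = x₁
    · refine ⟨x₁, memz _ (sub_self _), ?_, ?_, memz _ (by rw [sub_eq_zero]; exact e21)⟩
      · rw [← e21]; exact h22
      · exact h11
    by_cases e22 : y₂ = x₂
    · refine ⟨x₂, ?_, memz _ (sub_self _), h12,
        memz _ (by rw [sub_eq_zero]; exact e22)⟩
      rw [← e22]; exact h21
    -- all strict
    rw [mem] at h11 h12 h21 h22
    rcases h11 with h11 | h11
    swap
    · exact absurd (sub_eq_zero.mp h11) e11
    rcases h12 with h12 | h12
    swap
    · exact absurd (sub_eq_zero.mp h12) e12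
    rcases h21 with h21 | h21
    swap
    · exact absurd (sub_eq_zero.mp h21) e21
    rcases h22 with h22 | h22
    swap
    · exact absurd (sub_eq_zero.mp h22) e22
    obtain ⟨z2, hz1, hz2, hz3, hz4⟩ :=
      hGsriesz x₁.2 x₂.2 y₁.2 y₂.2 ⟨h11.1, h11.2⟩ ⟨h12.1, h12.2⟩ ⟨h21.1, h21.2⟩ ⟨h22.1, h22.2⟩
    refine ⟨((0 : H), z2), ?_, ?_, ?_, ?_⟩ <;> rw [mem] <;> left
    · exact ⟨hz1.1, hz1.2⟩
    · exact ⟨hz2.1, hz2.2⟩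
    · exact ⟨hz3.1, hz3.2⟩
    · exact ⟨hz4.1, hz4.2⟩
end

section
/- For every g ∈ Γ₊ there exist h₁, h₂ ∈ Γ₊ such that g = 2·h₁ + 3·h₂; that is, the positive cone Γ₊ is weakly divisible. -/
theorem eq_two_nsmul_add_three_nsmul {H G : Type*} [AddCommGroup H] [AddCommGroup G]
    [Module ℚ G] (a : H) (b : G) :
    (a, b) = 2 • (-a, (1 / 4 : ℚ) • b) + 3 • (a, (1 / 6 : ℚ) • b) := by
  ext
  · simp only [Prod.fst_add, Prod.smul_fst]
    abel
  · simp only [Prod.snd_add, Prod.smul_snd]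
    module

theorem mk_mem_gammaPos {H G : Type*} [AddCommGroup H] [AddCommGroup G] {Gpos : Set G}
    (a : H) {b : G} (hb : b ∈ Gpos) (hb0 : b ≠ 0) : (a, b) ∈ gammaPos H Gpos :=
  Or.inl ⟨hb, hb0⟩

theorem stmt_2_general {H G : Type*} [AddCommGroup H] [AddCommGroup G] [Module ℚ G]
    (Gpos : Set G)
    (hGscale : ∀ g ∈ Gpos, g ≠ 0 → ∀ q : ℚ, 0 < q → q • g ∈ Gpos ∧ q • g ≠ 0) :
    ∀ g ∈ gammaPos H Gpos, ∃ h₁ ∈ gammaPos H Gpos, ∃ h₂ ∈ gammaPos H Gpos,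
      g = 2 • h₁ + 3 • h₂ := by
  rintro ⟨a, b⟩ (⟨hb, hb0⟩ | hzero)
  · obtain ⟨hb₄, hb₄0⟩ := hGscale b hb hb0 (1 / 4) (by norm_num)
    obtain ⟨hb₆, hb₆0⟩ := hGscale b hb hb0 (1 / 6) (by norm_num)
    exact ⟨_, mk_mem_gammaPos (-a) hb₄ hb₄0, _, mk_mem_gammaPos a hb₆ hb₆0,
      eq_two_nsmul_add_three_nsmul a b⟩
  · exact ⟨0, Or.inr rfl, 0, Or.inr rfl, by simpa using hzero⟩

/-- Lemma 3.1(ii): the positive cone `Γ₊` is weakly divisible: every `g ∈ Γ₊` can be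
written as `g = 2·h₁ + 3·h₂` with `h₁, h₂ ∈ Γ₊`. -/
theorem stmt_2 {H G : Type*} [AddCommGroup H] [AddCommGroup G] [Module ℚ G]
    (Gpos : Set G)
    (hGadd : ∀ a ∈ Gpos, ∀ b ∈ Gpos, a + b ∈ Gpos)
    (hGcap : Gpos ∩ (-Gpos) = {0})
    (hGscale : ∀ g ∈ Gpos, g ≠ 0 → ∀ q : ℚ, 0 < q → q • g ∈ Gpos ∧ q • g ≠ 0) :
    ∀ g ∈ gammaPos H Gpos, ∃ h₁ ∈ gammaPos H Gpos, ∃ h₂ ∈ gammaPos H Gpos,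
      g = 2 • h₁ + 3 • h₂ :=
  stmt_2_general Gpos hGscale
end

section
/- If I is a nonzero order ideal of (Γ, Γ₊), then I = {(h, g) : h ∈ H, g ∈ p(I)}, where p(I) denotes the image of I under the projection p : Γ → G. In particular, H ⊕ {0} ⊆ I. -/
/-- An order ideal of an ordered abelian group `(A, pos)`: a subgroup `I` with
`I = (I ∩ pos) − (I ∩ pos)` such that `0 ≤ y ≤ x` and `x ∈ I` imply `y ∈ I`. -/
def IsOrderIdeal {A : Type*} [AddCommGroup A] (pos : Set A) (I : AddSubgroup A) : Prop :=
  (∀ x ∈ I, ∃ a, a ∈ I ∧ a ∈ pos ∧ ∃ b, b ∈ I ∧ b ∈ pos ∧ x = a - b) ∧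
  (∀ x y : A, x ∈ I → y ∈ pos → x - y ∈ pos → y ∈ I)

theorem IsOrderIdeal.exists_mem_pos_ne_zero {A : Type*} [AddCommGroup A] {pos : Set A}
    {I : AddSubgroup A} (hI : IsOrderIdeal pos I) (hIne : I ≠ ⊥) :
    ∃ a ∈ I, a ∈ pos ∧ a ≠ 0 := by
  obtain ⟨x, hxI, hx0⟩ := I.bot_or_exists_ne_zero.resolve_left hIne
  obtain ⟨a, haI, haP, b, hbI, hbP, rfl⟩ := hI.1 x hxI
  by_cases ha0 : a = 0
  · refine ⟨b, hbI, hbP, fun hb0 => hx0 ?_⟩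
    rw [ha0, hb0, sub_zero]
  · exact ⟨a, haI, haP, ha0⟩

section gammaPos

variable {H G : Type*} [AddCommGroup H] [AddCommGroup G] {Gpos : Set G}

theorem mem_gammaPos_of_snd {x : H × G} (hx : x.2 ∈ Gpos) (hx0 : x.2 ≠ 0) :
    x ∈ gammaPos H Gpos :=
  Or.inl ⟨hx, hx0⟩

theorem snd_mem_and_ne_zero_of_mem_gammaPos {x : H × G} (hx : x ∈ gammaPos H Gpos)
    (hx0 : x ≠ 0) : x.2 ∈ Gpos ∧ x.2 ≠ 0 :=
  hx.resolve_right hx0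

namespace IsOrderIdeal

variable {I : AddSubgroup (H × G)}

theorem mk_snd_mem (hI : IsOrderIdeal (gammaPos H Gpos) I) {a : H × G} (haI : a ∈ I)
    (ha : a.2 ∈ Gpos) (ha0 : a.2 ≠ 0) (h : H) : (h, a.2) ∈ I := by
  -- `(h, a.2) ≤ 2a` because `2a - (h, a.2) = (2 a.1 - h, a.2)` is positive.
  refine hI.2 (a + a) (h, a.2) (I.add_mem haI haI) (mem_gammaPos_of_snd ha ha0)
    (mem_gammaPos_of_snd ?_ ?_) <;> simpa

theorem ker_snd_le (hI : IsOrderIdeal (gammaPos H Gpos) I) (hIne : I ≠ ⊥) :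
    (AddMonoidHom.snd H G).ker ≤ I := by
  obtain ⟨a, haI, haP, ha0⟩ := hI.exists_mem_pos_ne_zero hIne
  obtain ⟨ha, ha2⟩ := snd_mem_and_ne_zero_of_mem_gammaPos haP ha0
  rintro ⟨h, g⟩ (rfl : g = 0)
  simpa using I.sub_mem (hI.mk_snd_mem haI ha ha2 h) (hI.mk_snd_mem haI ha ha2 0)

end IsOrderIdeal

end gammaPos

theorem AddSubgroup.mem_iff_mem_image_of_ker_le {A B : Type*} [AddGroup A] [AddGroup B]
    {f : A →+ B} {I : AddSubgroup A} (hI : f.ker ≤ I) (x : A) :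
    x ∈ I ↔ f x ∈ f '' (I : Set A) := by
  conv_lhs => rw [← AddSubgroup.comap_map_eq_self hI]
  rfl

theorem stmt_3_general {H G : Type*} [AddCommGroup H] [AddCommGroup G]
    (Gpos : Set G)
    (I : AddSubgroup (H × G))
    (hI : IsOrderIdeal (gammaPos H Gpos) I)
    (hIne : I ≠ ⊥) :
    (∀ h : H, ((h, 0) : H × G) ∈ I) ∧
    (∀ x : H × G, x ∈ I ↔ x.2 ∈ Prod.snd '' (I : Set (H × G))) := by
  have hker := hI.ker_snd_le hIne
  exact ⟨fun h => hker rfl, AddSubgroup.mem_iff_mem_image_of_ker_le hker⟩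

/-- Lemma 3.1(iii): a nonzero order ideal `I` of `(Γ, Γ₊)` satisfies
`I = {(h, g) : h ∈ H, g ∈ p(I)}`; in particular `H ⊕ {0} ⊆ I`. -/
theorem stmt_3 {H G : Type*} [AddCommGroup H] [AddCommGroup G]
    (Gpos : Set G)
    (hGadd : ∀ a ∈ Gpos, ∀ b ∈ Gpos, a + b ∈ Gpos)
    (hGcap : Gpos ∩ (-Gpos) = {0})
    (I : AddSubgroup (H × G))
    (hI : IsOrderIdeal (gammaPos H Gpos) I)
    (hIne : I ≠ ⊥) :
    (∀ h : H, ((h, 0) : H × G) ∈ I) ∧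
    (∀ x : H × G, x ∈ I ↔ x.2 ∈ Prod.snd '' (I : Set (H × G))) :=
  stmt_3_general Gpos I hI hIne
end

section
/- Let κ be a group automorphism of H and let α be a group automorphism of G with α(G₊) = G₊. Assume that the only order ideals J of (G, G₊) with α(J) = J are {0} and G. Then the only order ideals I of (Γ, Γ₊) with (κ ⊕ α)(I) = I are {0} and Γ, where κ ⊕ α is the automorphism of Γ = H ⊕ G given by (κ ⊕ α)(h, g) = (κ(h), α(g)). -/
/-- Lemma 3.1(iv): if `κ` is an automorphism of `H` and `α` an automorphism of `G` with
`α(G₊) = G₊`, and the only `α`-invariant order ideals of `(G, G₊)` are `{0}` and `G`,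
then the only `(κ ⊕ α)`-invariant order ideals of `(Γ, Γ₊)` are `{0}` and `Γ`. -/
theorem stmt_4 {H G : Type*} [AddCommGroup H] [AddCommGroup G]
    (Gpos : Set G)
    (hGadd : ∀ a ∈ Gpos, ∀ b ∈ Gpos, a + b ∈ Gpos)
    (hGcap : Gpos ∩ (-Gpos) = {0})
    (κ : H ≃+ H) (α : G ≃+ G)
    (hα : ⇑α '' Gpos = Gpos)
    (hGideals : ∀ J : AddSubgroup G, IsOrderIdeal Gpos J →
      ⇑α '' (J : Set G) = (J : Set G) → J = ⊥ ∨ J = ⊤) :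
    ∀ I : AddSubgroup (H × G), IsOrderIdeal (gammaPos H Gpos) I →
      (fun x : H × G => (κ x.1, α x.2)) '' (I : Set (H × G)) = (I : Set (H × G)) →
      I = ⊥ ∨ I = ⊤ := by

  intro I hI hInv
  have h0G : (0:G) ∈ Gpos := by
    have h : (0:G) ∈ ({0} : Set G) := rfl
    rw [← hGcap] at h
    exact h.1
  have memPos : ∀ a : H × G, a ∈ gammaPos H Gpos ↔ (a.2 ∈ Gpos ∧ a.2 ≠ 0) ∨ a = 0 := by
    intro a
    simp [gammaPos, or_comm]
  have posG : ∀ a : H × G, a ∈ gammaPos H Gpos → a.2 ∈ Gpos := by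
    intro a ha
    rcases (memPos a).1 ha with h | h
    · exact h.1
    · simp [h, h0G]
  by_cases hex : ∃ g₀, g₀ ∈ Gpos ∧ g₀ ≠ (0:G)
  case neg =>
    left
    ext x
    simp only [AddSubgroup.mem_bot]
    constructor
    · intro hx
      obtain ⟨a, haI, haP, b, hbI, hbP, hab⟩ := hI.1 x hx
      have ha0 : a = 0 := by
        rcases (memPos a).1 haP with h | h
        · exact absurd ⟨a.2, h.1, h.2⟩ hex
        · exact h
      have hb0 : b = 0 := by
        rcases (memPos b).1 hbP with h | h
        · exact absurd ⟨b.2, h.1, h.2⟩ hex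
        · exact h
      simp [hab, ha0, hb0]
    · rintro rfl; exact I.zero_mem
  case pos =>
    obtain ⟨g₀, hg₀, hg₀ne⟩ := hex
    set J : AddSubgroup G := I.map (AddMonoidHom.snd H G) with hJdef
    have memJ : ∀ g : G, g ∈ J ↔ ∃ h : H, (h, g) ∈ I := by
      intro g
      constructor
      · rintro ⟨⟨h, g'⟩, hx, rfl⟩; exact ⟨h, hx⟩
      · rintro ⟨h, hx⟩; exact ⟨(h, g), hx, rfl⟩
    have hJoi : IsOrderIdeal Gpos J := by
      constructor
      · intro g hg
        obtain ⟨h, hx⟩ := (memJ g).1 hg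
        obtain ⟨a, haI, haP, b, hbI, hbP, hab⟩ := hI.1 _ hx
        refine ⟨a.2, (memJ a.2).2 ⟨a.1, haI⟩, posG a haP, b.2,
          (memJ b.2).2 ⟨b.1, hbI⟩, posG b hbP, ?_⟩
        have := congrArg Prod.snd hab
        simpa using this
      · intro x y hx hyP hxyP
        by_cases hy0 : y = 0
        · rw [hy0]; exact J.zero_mem
        by_cases hxy : x = y
        · rw [← hxy]; exact hx
        obtain ⟨h, hhx⟩ := (memJ x).1 hx
        have h0y : ((0 : H), y) ∈ I := by
          apply hI.2 (h, x) (0, y) hhx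
          · exact (memPos _).2 (Or.inl ⟨hyP, hy0⟩)
          · refine (memPos _).2 (Or.inl ⟨?_, ?_⟩)
            · simpa using hxyP
            · simpa [sub_eq_zero] using hxy
        exact (memJ y).2 ⟨0, h0y⟩
    have hJinv : ⇑α '' (J : Set G) = (J : Set G) := by
      ext g
      simp only [Set.mem_image, SetLike.mem_coe]
      constructor
      · rintro ⟨g', hg', rfl⟩
        obtain ⟨h, hh⟩ := (memJ g').1 hg'
        have : (κ h, α g') ∈ I := by
          rw [← SetLike.mem_coe, ← hInv]
          exact ⟨(h, g'), hh, rfl⟩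
        exact (memJ _).2 ⟨κ h, this⟩
      · intro hg
        obtain ⟨h, hh⟩ := (memJ g).1 hg
        have hmem : ((h, g) : H × G) ∈ (fun x : H × G => (κ x.1, α x.2)) '' (I : Set (H × G)) := by
          rw [hInv]; exact hh
        obtain ⟨⟨h', g'⟩, hm, heq⟩ := hmem
        have hg' : α g' = g := congrArg Prod.snd heq
        exact ⟨g', (memJ g').2 ⟨h', hm⟩, hg'⟩
    rcases hGideals J hJoi hJinv with hbot | htop
    · left
      ext x
      simp only [AddSubgroup.mem_bot]
      constructor
      · intro hx
        obtain ⟨a, haI, haP, b, hbI, hbP, hab⟩ := hI.1 x hx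
        have ha0 : a = 0 := by
          rcases (memPos a).1 haP with hc | hc
          · exfalso
            have : a.2 ∈ J := (memJ a.2).2 ⟨a.1, haI⟩
            rw [hbot] at this
            exact hc.2 (by simpa using this)
          · exact hc
        have hb0 : b = 0 := by
          rcases (memPos b).1 hbP with hc | hc
          · exfalso
            have : b.2 ∈ J := (memJ b.2).2 ⟨b.1, hbI⟩
            rw [hbot] at this
            exact hc.2 (by simpa using this)
          · exact hc
        simp [hab, ha0, hb0]
      · rintro rfl; exact I.zero_mem
    · right
      -- step 1: if a ∈ I and a ∈ Γ₊ then (0, a.2) ∈ I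
      have step1 : ∀ a : H × G, a ∈ I → a ∈ gammaPos H Gpos → ((0 : H), a.2) ∈ I := by
        intro a haI haP
        rcases (memPos a).1 haP with hc | hc
        · have h2 : a + a ∈ I := I.add_mem haI haI
          apply hI.2 (a + a) (0, a.2) h2
          · exact (memPos _).2 (Or.inl ⟨hc.1, hc.2⟩)
          · refine (memPos _).2 (Or.inl ⟨?_, ?_⟩)
            · have : (a + a - ((0 : H), a.2)).2 = a.2 := by simp
              rw [this]; exact hc.1
            · have : (a + a - ((0 : H), a.2)).2 = a.2 := by simp
              rw [this]; exact hc.2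
        · rw [hc]; exact I.zero_mem
      -- step 2: (0, g) ∈ I for all g
      have step2 : ∀ g : G, ((0 : H), g) ∈ I := by
        intro g
        have : g ∈ J := by rw [htop]; trivial
        obtain ⟨h, hx⟩ := (memJ g).1 this
        obtain ⟨a, haI, haP, b, hbI, hbP, hab⟩ := hI.1 _ hx
        have h1 := step1 a haI haP
        have h2 := step1 b hbI hbP
        have : ((0 : H), g) = ((0 : H), a.2) - ((0 : H), b.2) := by
          have hg : g = a.2 - b.2 := by
            have := congrArg Prod.snd hab
            simpa using this
          simp [hg]
        rw [this]
        exact I.sub_mem h1 h2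
      -- 2g₀ facts
      have h2g₀ : g₀ + g₀ ∈ Gpos := hGadd g₀ hg₀ g₀ hg₀
      have h2g₀ne : g₀ + g₀ ≠ 0 := by
        intro hc
        have hneg : g₀ ∈ -Gpos := by
          have : -g₀ = g₀ := by
            have := neg_eq_of_add_eq_zero_left hc
            simpa using this
          simp only [Set.mem_neg, this]
          exact hg₀
        have : g₀ ∈ Gpos ∩ (-Gpos) := ⟨hg₀, hneg⟩
        rw [hGcap] at this
        exact hg₀ne this
      -- step 3: (h, g₀) ∈ I for all h
      have step3 : ∀ h : H, ((h : H), g₀) ∈ I := by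
        intro h
        apply hI.2 ((0 : H), g₀ + g₀) (h, g₀) (step2 _)
        · exact (memPos _).2 (Or.inl ⟨hg₀, hg₀ne⟩)
        · refine (memPos _).2 (Or.inl ⟨?_, ?_⟩)
          · have : (((0 : H), g₀ + g₀) - (h, g₀)).2 = g₀ := by simp
            rw [this]; exact hg₀
          · have : (((0 : H), g₀ + g₀) - (h, g₀)).2 = g₀ := by simp
            rw [this]; exact hg₀ne
      ext x
      simp only [AddSubgroup.mem_top, iff_true]
      have : x = (x.1, g₀) - ((0 : H), g₀) + ((0 : H), x.2) := by
        simp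
      rw [this]
      exact I.add_mem (I.sub_mem (step3 x.1) (step2 g₀)) (step2 x.2)
end

section
/- Let I be an order ideal of (Γ, Γ₊). Then there is no group homomorphism q : I → ℤ such that q(x) ≥ 0 for every x ∈ I ∩ Γ₊ and q(x₀) = 1 for some x₀ ∈ I ∩ Γ₊. Consequently, the ordered group (Γ, Γ₊) has no nonzero liminary subquotients: no subquotient of Γ by order ideals has a prime quotient order-isomorphic to ℤ. -/
/-- Lemma 3.1(v), main claim: for an order ideal `I` of `(Γ, Γ₊)` there is no group
homomorphism `q : I → ℤ` which is nonnegative on `I ∩ Γ₊` and takes the value `1` at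
some point of `I ∩ Γ₊`.  (Consequently `(Γ, Γ₊)` has no nonzero liminary subquotients.) -/
theorem stmt_5 {H G : Type*} [AddCommGroup H] [AddCommGroup G] [Module ℚ G]
    (Gpos : Set G)
    (hGadd : ∀ a ∈ Gpos, ∀ b ∈ Gpos, a + b ∈ Gpos)
    (hGcap : Gpos ∩ (-Gpos) = {0})
    (hGscale : ∀ g ∈ Gpos, g ≠ 0 → ∀ q : ℚ, 0 < q → q • g ∈ Gpos ∧ q • g ≠ 0)
    (I : AddSubgroup (H × G))
    (hI : IsOrderIdeal (gammaPos H Gpos) I)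
    (q : I →+ ℤ)
    (hqpos : ∀ x : I, (x : H × G) ∈ gammaPos H Gpos → 0 ≤ q x)
    (x₀ : I) (hx₀ : (x₀ : H × G) ∈ gammaPos H Gpos) (hq₀ : q x₀ = 1) :
    False := by
  obtain ⟨hg, hgne⟩ : (x₀ : H × G).2 ∈ Gpos ∧ (x₀ : H × G).2 ≠ 0 := by
    rcases hx₀ with h | h
    · exact h
    · exfalso
      have : x₀ = 0 := Subtype.ext h
      rw [this, map_zero] at hq₀
      exact one_ne_zero hq₀.symm
  set g : G := (x₀ : H × G).2 with hgdef
  have posG : ∀ r : ℚ, 0 < r → r • g ∈ Gpos ∧ r • g ≠ 0 :=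
    fun r hr => hGscale g hg hgne r hr
  have eGamma : ∀ (h : H) (r : ℚ), 0 < r → (h, r • g) ∈ gammaPos H Gpos := by
    intro h r hr
    exact Or.inl ⟨(posG r hr).1, (posG r hr).2⟩
  have hsub : ∀ r : ℚ, (x₀ : H × G) - ((0 : H), r • g)
      = ((x₀ : H × G).1, (1 - r) • g) := by
    intro r
    have h1 : (1 - r) • g = g - r • g := by rw [sub_smul, one_smul]
    ext
    · simp
    · simp [h1, hgdef, sub_smul]
  have eI : ∀ r : ℚ, 0 < r → r < 1 → ((0 : H), r • g) ∈ I := by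
    intro r hr hr1
    refine hI.2 (x₀ : H × G) _ x₀.2 (eGamma 0 r hr) ?_
    rw [hsub r]
    exact eGamma _ (1 - r) (by linarith)
  set E2 : I := ⟨((0 : H), (1/2 : ℚ) • g), eI (1/2) (by norm_num) (by norm_num)⟩ with hE2
  set E4 : I := ⟨((0 : H), (1/4 : ℚ) • g), eI (1/4) (by norm_num) (by norm_num)⟩ with hE4
  have hE2E4 : E2 = E4 + E4 := by
    apply Subtype.ext
    show ((0 : H), (1/2 : ℚ) • g) = ((0 : H), (1/4 : ℚ) • g) + ((0 : H), (1/4 : ℚ) • g)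
    have : (1/2 : ℚ) • g = (1/4 : ℚ) • g + (1/4 : ℚ) • g := by
      rw [← add_smul]; norm_num
    rw [Prod.mk_add_mk, add_zero, ← this]
  set c : ℤ := q E2 with hc
  set d : ℤ := q E4 with hd
  have hceven : c = d + d := by rw [hc, hE2E4, map_add]
  have hdpos : 0 ≤ d := hqpos E4 (eGamma 0 (1/4) (by norm_num))
  -- v := x₀ - E2, underlying element (x₀.1, (1/2)•g)
  have hvcoe : ((x₀ - E2 : I) : H × G) = ((x₀ : H × G).1, (1/2 : ℚ) • g) := by
    push_cast
    have := hsub (1/2)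
    norm_num at this ⊢
    exact this
  have hvpos : 0 ≤ q (x₀ - E2) := by
    apply hqpos
    rw [hvcoe]
    exact eGamma _ (1/2) (by norm_num)
  have hqv : q (x₀ - E2) = 1 - c := by rw [map_sub, hq₀, hc]
  -- w := (x₀ - E2) + (x₀ - E2) - x₀, underlying (x₀.1, 0)
  set w : I := (x₀ - E2) + (x₀ - E2) - x₀ with hw
  have hwcoe : (w : H × G) = ((x₀ : H × G).1, 0) := by
    have : (w : H × G) = ((x₀ - E2 : I) : H × G) + ((x₀ - E2 : I) : H × G) - (x₀ : H × G) := by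
      push_cast [hw]; ring
    rw [this, hvcoe]
    have h2 : (1/2 : ℚ) • g + (1/2 : ℚ) • g = g := by
      rw [← add_smul]; norm_num
    ext
    · simp
    · show (1/2 : ℚ) • g + (1/2 : ℚ) • g - g = 0
      rw [h2, sub_self]
  have hqw : q w = 1 - c - c := by
    rw [hw, map_sub, map_add, hqv, hq₀]; ring
  -- z := E2 - w, underlying (-(x₀.1), (1/2)•g) ∈ Γ₊
  have hzcoe : ((E2 - w : I) : H × G) = (-(x₀ : H × G).1, (1/2 : ℚ) • g) := by
    push_cast
    rw [hwcoe]
    ext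
    · show (0 : H) - (x₀ : H × G).1 = -(x₀ : H × G).1
      rw [zero_sub]
    · show (1/2 : ℚ) • g - 0 = (1/2 : ℚ) • g
      rw [sub_zero]
  have hzpos : 0 ≤ q (E2 - w) := by
    apply hqpos
    rw [hzcoe]
    exact eGamma _ (1/2) (by norm_num)
  have hqz : q (E2 - w) = c - (1 - c - c) := by rw [map_sub, hqw, hc]
  rw [hqz] at hzpos
  rw [hqv] at hvpos
  omega
end

section
/- Fix w ∈ H and g₁ ∈ G₊ \ {0}, and set v = (w, g₁) ∈ Γ₊. Let φ : Γ → ℝ be a group homomorphism with φ(x) ≥ 0 for all x ∈ Γ₊ and φ(v) = 1. Then φ(h, 0) = 0 for every h ∈ H, and there is a group homomorphism ψ : G → ℝ with ψ(g) ≥ 0 for all g ∈ G₊, ψ(g₁) = 1, and ψ ∘ p = φ. -/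
/-- Key step of Lemma 3.3: a positive group homomorphism `φ : Γ → ℝ` normalized at
`v = (w, g₁)` vanishes on `H ⊕ {0}` and factors through the projection `p : Γ → G`
via a positive homomorphism `ψ : G → ℝ` with `ψ(g₁) = 1`. -/
theorem stmt_6 {H G : Type*} [AddCommGroup H] [AddCommGroup G]
    (Gpos : Set G)
    (hGadd : ∀ a ∈ Gpos, ∀ b ∈ Gpos, a + b ∈ Gpos)
    (hGcap : Gpos ∩ (-Gpos) = {0})
    (w : H) (g₁ : G) (hg₁ : g₁ ∈ Gpos) (hg₁0 : g₁ ≠ 0)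
    (φ : H × G →+ ℝ)
    (hφpos : ∀ x ∈ gammaPos H Gpos, 0 ≤ φ x)
    (hφv : φ (w, g₁) = 1) :
    (∀ h : H, φ (h, 0) = 0) ∧
    ∃ ψ : G →+ ℝ, (∀ g ∈ Gpos, 0 ≤ ψ g) ∧ ψ g₁ = 1 ∧ ∀ x : H × G, ψ x.2 = φ x := by
  have key : ∀ (h : H) (n : ℤ), 0 ≤ (n : ℝ) * φ (h, 0) + φ (0, g₁) := by
    intro h n
    have hmem : ((n • h, g₁) : H × G) ∈ gammaPos H Gpos := Or.inl ⟨hg₁, hg₁0⟩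
    have heq : ((n • h, g₁) : H × G) = n • ((h, 0) : H × G) + (0, g₁) := by
      simp [Prod.ext_iff]
    have := hφpos _ hmem
    rw [heq, map_add, map_zsmul] at this
    simpa [zsmul_eq_mul] using this
  have h0 : ∀ h : H, φ (h, 0) = 0 := by
    intro h
    by_contra hc
    set c := φ (h, 0) with hcdef
    set d := φ (0, g₁) with hddef
    have hbound : ∀ n : ℤ, |(n : ℝ) * c| ≤ d := by
      intro n
      have h1 := key h n
      have h2 := key h (-n)
      push_cast at h2
      rw [abs_le]
      constructor <;> linarith
    have hcpos : 0 < |c| := abs_pos.2 hc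
    obtain ⟨n, hn⟩ := exists_nat_gt (d / |c|)
    have hd : d < n * |c| := by
      rw [div_lt_iff₀ hcpos] at hn
      exact hn
    have := hbound (n : ℤ)
    rw [abs_mul] at this
    push_cast at this
    simp at this
    linarith
  refine ⟨h0, φ.comp (AddMonoidHom.inr H G), ?_, ?_, ?_⟩
  · intro g hg
    rcases eq_or_ne g 0 with rfl | hne
    · exact (map_zero _).ge
    · exact hφpos _ (Or.inl ⟨hg, hne⟩)
  · have heq : ((w, g₁) : H × G) = (w, 0) + (0, g₁) := by simp
    have := hφv
    rw [heq, map_add, h0 w] at this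
    simpa using this
  · intro x
    have heq : (x : H × G) = (x.1, 0) + (0, x.2) := by simp
    conv_rhs => rw [heq]
    rw [map_add, h0 x.1]
    simp
end

section
/- The pair (Λ, Λ₊) is an ordered abelian group (Λ₊ + Λ₊ ⊆ Λ₊, Λ₊ ∩ (−Λ₊) = {0}, and Λ = Λ₊ − Λ₊), and it is unperforated: for every integer n ≥ 1 and λ ∈ Λ, if n·λ ∈ Λ₊ then λ ∈ Λ₊. -/
/-- Torsion-free additive monoid (the definition of the former Mathlib
`AddMonoid.IsTorsionFree`): no nonzero element has finite additive order. -/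
def AddMonoid.IsTorsionFree (G : Type*) [AddMonoid G] : Prop :=
  ∀ g : G, g ≠ 0 → ¬IsOfFinAddOrder g

/-- The order ideal `I(g₀) = {g : ∃ k ∈ ℕ, −k·g₀ ≤ g ≤ k·g₀}` of `(G, G₊)` generated by
`g₀ ∈ G₊`, where `a ≤ b` means `b − a ∈ G₊`. -/
def idealGen {G : Type*} [AddCommGroup G] (Gpos : Set G) (g₀ : G) : Set G :=
  {g : G | ∃ k : ℕ, g + k • g₀ ∈ Gpos ∧ k • g₀ - g ∈ Gpos}

/-- The positive cone `Λ₊` on `Λ = Γ ⊕ (H₁ ⊕ G)`: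
`Λ₊ = {((h₀,g₀),(h₁,g₁)) : (h₀,g₀) ∈ Γ₊ \ {0}, g₁ ∈ I(g₀)} ∪ {0}`. -/
def lambdaPos (H₀ H₁ : Type*) {G : Type*} (Gpos : Set G)
    [AddCommGroup H₀] [AddCommGroup H₁] [AddCommGroup G] :
    Set ((H₀ × G) × (H₁ × G)) :=
  {x : (H₀ × G) × (H₁ × G) |
    (x.1 ∈ gammaPos H₀ Gpos ∧ x.1 ≠ 0) ∧ x.2.2 ∈ idealGen Gpos x.1.2} ∪ {0}

section Aux

variable {G : Type*} [AddCommGroup G] {Gpos : Set G}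

lemma aux_tf_eq_zero {G : Type*} [AddCommGroup G] (hG : AddMonoid.IsTorsionFree G)
    {n : ℕ} (hn : 1 ≤ n) {g : G} (h : n • g = 0) : g = 0 := by
  by_contra hg
  exact hG g hg (isOfFinAddOrder_iff_nsmul_eq_zero.mpr ⟨n, hn, h⟩)

lemma aux_nsmul_mem (hGadd : ∀ a ∈ Gpos, ∀ b ∈ Gpos, a + b ∈ Gpos)
    (h0 : (0:G) ∈ Gpos) {g : G} (hg : g ∈ Gpos) (n : ℕ) : n • g ∈ Gpos := by
  induction n with
  | zero => simpa
  | succ n ih => rw [succ_nsmul]; exact hGadd _ ih _ hg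

lemma aux_mono (hGadd : ∀ a ∈ Gpos, ∀ b ∈ Gpos, a + b ∈ Gpos)
    (h0 : (0:G) ∈ Gpos) {g g₀ : G} (hg₀ : g₀ ∈ Gpos) {k : ℕ}
    (h : g + k • g₀ ∈ Gpos) (m : ℕ) : g + (k + m) • g₀ ∈ Gpos := by
  have e : g + (k + m) • g₀ = (g + k • g₀) + m • g₀ := by rw [add_nsmul]; abel
  rw [e]; exact hGadd _ h _ (aux_nsmul_mem hGadd h0 hg₀ m)

lemma mem_lambdaPos_iff {H₀ H₁ G : Type*} [AddCommGroup H₀] [AddCommGroup H₁] [AddCommGroup G]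
    (Gpos : Set G) (x : (H₀ × G) × (H₁ × G)) :
    x ∈ lambdaPos H₀ H₁ Gpos ↔
      (x.1.2 ∈ Gpos ∧ x.1.2 ≠ 0 ∧ x.2.2 ∈ idealGen Gpos x.1.2) ∨ x = 0 := by
  unfold lambdaPos gammaPos
  constructor
  · rintro (⟨⟨hmem, hne⟩, hid⟩ | h)
    · rcases hmem with ⟨h1, h2⟩ | h0
      · exact Or.inl ⟨h1, h2, hid⟩
      · exact absurd h0 hne
    · exact Or.inr h
  · rintro (⟨h1, h2, hid⟩ | h)
    · refine Or.inl ⟨⟨Or.inl ⟨h1, h2⟩, ?_⟩, hid⟩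
      intro h0
      apply h2
      rw [show x.1.2 = (x.1).2 from rfl, h0]
      rfl
    · exact Or.inr h

end Aux

/-- Lemma 3.4(i)-(ii): `(Λ, Λ₊)` is an ordered abelian group and it is unperforated. -/
theorem stmt_7 {H₀ H₁ G : Type*} [AddCommGroup H₀] [AddCommGroup H₁] [AddCommGroup G]
    (hH₀ : AddMonoid.IsTorsionFree H₀) (hH₁ : AddMonoid.IsTorsionFree H₁)
    (hG : AddMonoid.IsTorsionFree G)
    (Gpos : Set G)
    (hGadd : ∀ a ∈ Gpos, ∀ b ∈ Gpos, a + b ∈ Gpos)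
    (hGcap : Gpos ∩ (-Gpos) = {0})
    (hGwu : ∀ n : ℕ, 1 ≤ n → ∀ g : G, n • g ∈ Gpos → n • g ≠ 0 → g ∈ Gpos ∧ g ≠ 0)
    (hGdir : ∀ g : G, ∃ a ∈ Gpos, ∃ b ∈ Gpos, g = a - b)
    (hGne : Gpos ≠ {0}) :
    (∀ a ∈ lambdaPos H₀ H₁ Gpos, ∀ b ∈ lambdaPos H₀ H₁ Gpos,
      a + b ∈ lambdaPos H₀ H₁ Gpos) ∧
    lambdaPos H₀ H₁ Gpos ∩ (-(lambdaPos H₀ H₁ Gpos)) = {0} ∧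
    (∀ x : (H₀ × G) × (H₁ × G), ∃ a ∈ lambdaPos H₀ H₁ Gpos, ∃ b ∈ lambdaPos H₀ H₁ Gpos,
      x = a - b) ∧
    (∀ n : ℕ, 1 ≤ n → ∀ x : (H₀ × G) × (H₁ × G),
      n • x ∈ lambdaPos H₀ H₁ Gpos → x ∈ lambdaPos H₀ H₁ Gpos) := by
  have h0G : (0:G) ∈ Gpos := by
    have h : (0:G) ∈ Gpos ∩ (-Gpos) := by rw [hGcap]; rfl
    exact h.1
  have hcap : ∀ g : G, g ∈ Gpos → -g ∈ Gpos → g = 0 := by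
    intro g h1 h2
    have h : g ∈ Gpos ∩ (-Gpos) := ⟨h1, Set.mem_neg.mpr h2⟩
    rwa [hGcap] at h
  refine ⟨?_, ?_, ?_, ?_⟩
  · -- additivity
    intro a ha b hb
    rw [mem_lambdaPos_iff] at ha hb ⊢
    rcases ha with ⟨ha1, ha2, k, hk1, hk2⟩ | rfl
    · rcases hb with ⟨hb1, hb2, l, hl1, hl2⟩ | rfl
      · left
        refine ⟨?_, ?_, k + l, ?_, ?_⟩
        · show a.1.2 + b.1.2 ∈ Gpos
          exact hGadd _ ha1 _ hb1
        · show a.1.2 + b.1.2 ≠ 0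
          intro heq
          exact hb2 (hcap b.1.2 hb1 (by rw [neg_eq_of_add_eq_zero_left heq]; exact ha1))
        · show (a.2.2 + b.2.2) + (k + l) • (a.1.2 + b.1.2) ∈ Gpos
          have e : (a.2.2 + b.2.2) + (k + l) • (a.1.2 + b.1.2) =
              (a.2.2 + k • a.1.2) + ((b.2.2 + l • b.1.2) + (l • a.1.2 + k • b.1.2)) := by
            rw [smul_add, add_smul, add_smul]; abel
          rw [e]
          exact hGadd _ hk1 _ (hGadd _ hl1 _
            (hGadd _ (aux_nsmul_mem hGadd h0G ha1 l) _ (aux_nsmul_mem hGadd h0G hb1 k)))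
        · show (k + l) • (a.1.2 + b.1.2) - (a.2.2 + b.2.2) ∈ Gpos
          have e : (k + l) • (a.1.2 + b.1.2) - (a.2.2 + b.2.2) =
              (k • a.1.2 - a.2.2) + ((l • b.1.2 - b.2.2) + (l • a.1.2 + k • b.1.2)) := by
            rw [smul_add, add_smul, add_smul]; abel
          rw [e]
          exact hGadd _ hk2 _ (hGadd _ hl2 _
            (hGadd _ (aux_nsmul_mem hGadd h0G ha1 l) _ (aux_nsmul_mem hGadd h0G hb1 k)))
      · rw [add_zero]; exact Or.inl ⟨ha1, ha2, k, hk1, hk2⟩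
    · rw [zero_add]; exact hb
  · -- intersection
    ext x
    simp only [Set.mem_inter_iff, Set.mem_neg, Set.mem_singleton_iff]
    constructor
    · rintro ⟨hx, hnx⟩
      rw [mem_lambdaPos_iff] at hx hnx
      rcases hx with ⟨h1, h2, -⟩ | rfl
      · rcases hnx with ⟨h1', -, -⟩ | h0
        · exact absurd (hcap x.1.2 h1 (by simpa using h1')) h2
        · exact neg_eq_zero.mp h0
      · rfl
    · rintro rfl
      constructor <;> · rw [mem_lambdaPos_iff]; right; simp
  · -- directed
    intro x
    have hp : ∃ p ∈ Gpos, p ≠ 0 := by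
      by_contra hcon
      push_neg at hcon
      apply hGne
      ext g
      simp only [Set.mem_singleton_iff]
      exact ⟨fun hg => hcon g hg, fun hg => hg ▸ h0G⟩
    obtain ⟨p, hp, hpne⟩ := hp
    obtain ⟨u, hu, v, hv, huv⟩ := hGdir x.1.2
    obtain ⟨s, hs, t, ht, hst⟩ := hGdir x.2.2
    have hsum : ∀ w, w ∈ Gpos → w + p + s + t ∈ Gpos ∧ w + p + s + t ≠ 0 := by
      intro w hw
      refine ⟨hGadd _ (hGadd _ (hGadd _ hw _ hp) _ hs) _ ht, fun heq => ?_⟩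
      apply hpne
      apply hcap p hp
      have hne2 : -p = w + s + t :=
        neg_eq_of_add_eq_zero_left (show (w + s + t) + p = 0 by rw [← heq]; abel)
      rw [hne2]
      exact hGadd _ (hGadd _ hw _ hs) _ ht
    refine ⟨((x.1.1, u + p + s + t), x.2), ?_, ((0, v + p + s + t), (0, 0)), ?_, ?_⟩
    · rw [mem_lambdaPos_iff]
      refine Or.inl ⟨(hsum u hu).1, (hsum u hu).2, 1, ?_, ?_⟩
      · show x.2.2 + 1 • (u + p + s + t) ∈ Gpos
        have e : x.2.2 + 1 • (u + p + s + t) = u + p + (s + s) := by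
          rw [one_smul, hst]; abel
        rw [e]
        exact hGadd _ (hGadd _ hu _ hp) _ (hGadd _ hs _ hs)
      · show 1 • (u + p + s + t) - x.2.2 ∈ Gpos
        have e : 1 • (u + p + s + t) - x.2.2 = u + p + (t + t) := by
          rw [one_smul, hst]; abel
        rw [e]
        exact hGadd _ (hGadd _ hu _ hp) _ (hGadd _ ht _ ht)
    · rw [mem_lambdaPos_iff]
      refine Or.inl ⟨(hsum v hv).1, (hsum v hv).2, 0, ?_, ?_⟩ <;> simpa using h0G
    · have e1 : x.1.2 = (u + p + s + t) - (v + p + s + t) := by rw [huv]; abel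
      ext <;> simp [e1.symm]
  · -- unperforated
    intro n hn x hx
    rw [mem_lambdaPos_iff] at hx ⊢
    rcases hx with ⟨h1, h2, k, hk1, hk2⟩ | h0
    · have hfst : (n • x).1.2 = n • x.1.2 := rfl
      rw [hfst] at h1 h2
      obtain ⟨hg0, hg0ne⟩ := hGwu n hn x.1.2 h1 h2
      left
      refine ⟨hg0, hg0ne, ?_⟩
      have hsnd : (n • x).2.2 = n • x.2.2 := rfl
      rw [hfst, hsnd] at hk1 hk2
      have hk1' : n • (x.2.2 + k • x.1.2) ∈ Gpos := by
        rw [smul_add, smul_comm]; exact hk1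
      have hk2' : n • (k • x.1.2 - x.2.2) ∈ Gpos := by
        rw [smul_sub, smul_comm]; exact hk2
      have e1 : ∃ k₁ : ℕ, x.2.2 + k₁ • x.1.2 ∈ Gpos := by
        by_cases hz : n • (x.2.2 + k • x.1.2) = 0
        · refine ⟨k + 1, ?_⟩
          have hz' : x.2.2 + k • x.1.2 = 0 := aux_tf_eq_zero hG hn hz
          have e : x.2.2 + (k + 1) • x.1.2 = (x.2.2 + k • x.1.2) + x.1.2 := by
            rw [add_nsmul, one_smul]; abel
          rw [e, hz', zero_add]; exact hg0
        · exact ⟨k, (hGwu n hn _ hk1' hz).1⟩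
      have e2 : ∃ k₂ : ℕ, (-x.2.2) + k₂ • x.1.2 ∈ Gpos := by
        by_cases hz : n • (k • x.1.2 - x.2.2) = 0
        · refine ⟨k + 1, ?_⟩
          have hz' : k • x.1.2 - x.2.2 = 0 := aux_tf_eq_zero hG hn hz
          have e : (-x.2.2) + (k + 1) • x.1.2 = (k • x.1.2 - x.2.2) + x.1.2 := by
            rw [add_nsmul, one_smul]; abel
          rw [e, hz', zero_add]; exact hg0
        · refine ⟨k, ?_⟩
          have e : (-x.2.2) + k • x.1.2 = k • x.1.2 - x.2.2 := by abel
          rw [e]; exact (hGwu n hn _ hk2' hz).1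
      obtain ⟨k₁, hk₁⟩ := e1
      obtain ⟨k₂, hk₂⟩ := e2
      refine ⟨k₁ + k₂, aux_mono hGadd h0G hg0 hk₁ k₂, ?_⟩
      have e : (k₁ + k₂) • x.1.2 - x.2.2 = (-x.2.2) + (k₂ + k₁) • x.1.2 := by
        rw [add_comm k₂ k₁]; abel
      rw [e]
      exact aux_mono hGadd h0G hg0 hk₂ k₁
    · right
      have hx0 : n • x = 0 := h0
      have e1 : n • x.1.1 = 0 := congrArg (fun y => y.1.1) hx0
      have e2 : n • x.1.2 = 0 := congrArg (fun y => y.1.2) hx0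
      have e3 : n • x.2.1 = 0 := congrArg (fun y => y.2.1) hx0
      have e4 : n • x.2.2 = 0 := congrArg (fun y => y.2.2) hx0
      have := aux_tf_eq_zero hH₀ hn e1
      have := aux_tf_eq_zero hG hn e2
      have := aux_tf_eq_zero hH₁ hn e3
      have := aux_tf_eq_zero hG hn e4
      ext <;> assumption
end

section
/- Let K and G₀ be abelian groups and let η : G₀ → G₀ be a group endomorphism such that id − η is bijective. Let D = (⊕_{n ∈ ℤ} K) ⊕ G₀, where ⊕_{n ∈ ℤ} K denotes finitely supported functions ℤ → K, let σ be the left shift on ⊕_{n ∈ ℤ} K given by σ(ξ)ₙ = ξ_{n+1}, and let α : D → D be the endomorphism α(ξ, f) = (σ(ξ), η(f)). Define Σ₀ : D → K by Σ₀(ξ, f) = Σ_{n ∈ ℤ} ξₙ. Then: (a) id − α is injective; (b) the image of id − α equals the kernel of Σ₀; and (c) Σ₀ is surjective. Consequently Σ₀ induces a group isomorphism D/(id − α)(D) ≅ K. -/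
/-!
On the `G₀` factor `id - α` is `id - η`, a bijection. On `ℤ →₀ K` it is `id - σ`: a shift-invariant
finitely supported function is constant, hence zero, and the total sum is shift-invariant, so it
vanishes on the image. Conversely the image contains every telescoping difference
`single n b - single 0 b`, and every `f` is such a sum up to `single 0 (∑ₙ fₙ)`.
-/

namespace Finsupp

variable {K : Type*} [AddCommGroup K]

noncomputable def shiftLeft : (ℤ →₀ K) →+ (ℤ →₀ K) :=
  (Finsupp.domCongr (Equiv.addRight (1 : ℤ)).symm).toAddMonoidHom

@[simp]
theorem shiftLeft_apply (f : ℤ →₀ K) (n : ℤ) : shiftLeft f n = f (n + 1) := rfl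

theorem shiftLeft_single (n : ℤ) (b : K) : shiftLeft (single n b) = single (n - 1) b := by
  ext m
  simp only [shiftLeft_apply, single_apply, sub_eq_iff_eq_add]

theorem sum_shiftLeft (f : ℤ →₀ K) :
    (shiftLeft f).sum (fun _ k => k) = f.sum (fun _ k => k) := by
  classical
  rw [shiftLeft, AddEquiv.coe_toAddMonoidHom, Finsupp.domCongr_apply,
    equivMapDomain_eq_mapDomain, sum_mapDomain_index_inj (Equiv.injective _)]

theorem eq_zero_of_shiftLeft_eq {f : ℤ →₀ K} (h : shiftLeft f = f) : f = 0 := by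
  have hconst : ∀ n, f n = f 0 := by
    intro n
    induction n using Int.induction_on with
    | zero => rfl
    | succ n ih => rw [← shiftLeft_apply, h, ih]
    | pred n ih =>
      have := DFunLike.congr_fun h (-(n : ℤ) - 1)
      rw [shiftLeft_apply, sub_add_cancel] at this
      rw [← this, ih]
  obtain ⟨m, hm⟩ := Infinite.exists_notMem_finset f.support
  ext n
  rw [hconst, ← hconst m, notMem_support_iff.mp hm, coe_zero, Pi.zero_apply]

theorem single_sub_single_zero_mem_range (n : ℤ) (b : K) :
    single n b - single 0 b ∈ (AddMonoidHom.id _ - shiftLeft).range := by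
  have hstep : ∀ n : ℤ, single n b - single (n - 1) b ∈ (AddMonoidHom.id _ - shiftLeft).range :=
    fun n => ⟨single n b, by simp [shiftLeft_single]⟩
  induction n using Int.induction_on with
  | zero => simp
  | succ n ih =>
    simpa [sub_add_sub_cancel] using add_mem (hstep (n + 1)) ih
  | pred n ih =>
    simpa [sub_sub_sub_cancel_left] using sub_mem ih (hstep (-n))

theorem exists_sub_shiftLeft_eq_iff (f : ℤ →₀ K) :
    (∃ g, g - shiftLeft g = f) ↔ f.sum (fun _ k => k) = 0 := by
  constructor
  · rintro ⟨g, rfl⟩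
    rw [sum_sub_index (fun _ _ _ => rfl), sum_shiftLeft, sub_self]
  · intro hf
    suffices ∀ f : ℤ →₀ K,
        f - single 0 (f.sum fun _ k => k) ∈ (AddMonoidHom.id _ - shiftLeft).range by
      simpa [hf] using this f
    intro f
    induction f using induction_linear with
    | zero => simp
    | add f g hf hg =>
      rw [sum_add_index' (fun _ => rfl) (fun _ _ _ => rfl), single_add]
      convert add_mem hf hg using 1
      abel
    | single n b =>
      rw [sum_single_index rfl]
      exact single_sub_single_zero_mem_range n b

end Finsupp

open Finsupp in
/-- Algebraic core of Lemma 4.2(iv) and (vi): with `D = (⊕_{n ∈ ℤ} K) ⊕ G₀`,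
`α(ξ, f) = (σ ξ, η f)` (σ the left shift) and `Σ₀(ξ, f) = Σₙ ξₙ`, the map `id − α` is
injective, its image is the kernel of `Σ₀`, and `Σ₀` is surjective; consequently `Σ₀`
induces an isomorphism `D/(id − α)(D) ≅ K`. -/
theorem stmt_8 {K G₀ : Type*} [AddCommGroup K] [AddCommGroup G₀]
    (η : G₀ →+ G₀) (hη : Function.Bijective (fun g : G₀ => g - η g))
    (α : ((ℤ →₀ K) × G₀) →+ ((ℤ →₀ K) × G₀))
    (hα₁ : ∀ (x : (ℤ →₀ K) × G₀) (n : ℤ), (α x).1 n = x.1 (n + 1))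
    (hα₂ : ∀ x : (ℤ →₀ K) × G₀, (α x).2 = η x.2)
    (sum₀ : ((ℤ →₀ K) × G₀) →+ K)
    (hsum₀ : ∀ x : (ℤ →₀ K) × G₀, sum₀ x = x.1.sum fun _ k => k) :
    Function.Injective (fun x : (ℤ →₀ K) × G₀ => x - α x) ∧
    (∀ x : (ℤ →₀ K) × G₀, (∃ y : (ℤ →₀ K) × G₀, y - α y = x) ↔ sum₀ x = 0) ∧
    Function.Surjective sum₀ ∧
    ∃ e : (((ℤ →₀ K) × G₀) ⧸ (AddMonoidHom.id ((ℤ →₀ K) × G₀) - α).range) ≃+ K,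
      ∀ x : (ℤ →₀ K) × G₀, e (QuotientAddGroup.mk x) = sum₀ x := by
  have hsub : ∀ y, y - α y = (y.1 - shiftLeft y.1, y.2 - η y.2) := fun y =>
    Prod.ext (by ext n; simp [hα₁]) (by simp [hα₂])
  have hinj : Function.Injective (fun x : (ℤ →₀ K) × G₀ => x - α x) := by
    refine (injective_iff_map_eq_zero (AddMonoidHom.id _ - α)).mpr fun y hy => ?_
    obtain ⟨h₁, h₂⟩ := Prod.ext_iff.mp ((hsub y).symm.trans hy)
    refine Prod.ext (eq_zero_of_shiftLeft_eq (sub_eq_zero.mp h₁).symm) (hη.1 ?_)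
    simpa using h₂
  have hrange : ∀ x, (∃ y, y - α y = x) ↔ sum₀ x = 0 := fun x => by
    simp only [hsub, hsum₀, Prod.ext_iff, ← exists_sub_shiftLeft_eq_iff]
    exact ⟨fun ⟨y, h₁, _⟩ => ⟨y.1, h₁⟩, fun ⟨g, hg⟩ =>
      let ⟨w, hw⟩ := hη.2 x.2; ⟨(g, w), hg, hw⟩⟩
  have hsurj : Function.Surjective sum₀ := fun k =>
    ⟨(single 0 k, 0), by rw [hsum₀, sum_single_index rfl]⟩
  have hker : (AddMonoidHom.id _ - α).range = sum₀.ker := AddSubgroup.ext hrange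
  exact ⟨hinj, hrange, hsurj, (QuotientAddGroup.quotientAddEquivOfEq hker).trans
    (QuotientAddGroup.quotientKerEquivOfSurjective sum₀ hsurj), fun _ => rfl⟩
end

section
/- Let S be a compact topological space, let G be an abelian group, and let T : G → C(S, ℝ) be a group homomorphism whose image T(G) is dense in C(S, ℝ) with respect to the supremum norm. Then for all x₁, x₂, y₁, y₂ ∈ G satisfying (T xᵢ)(s) < (T yⱼ)(s) for every s ∈ S and all i, j ∈ {1, 2}, there exists z ∈ G such that (T xᵢ)(s) < (T z)(s) < (T yⱼ)(s) for every s ∈ S and all i, j ∈ {1, 2}. In particular, with the cone G₊ = {x ∈ G : (T x)(s) > 0 for all s ∈ S} ∪ {0}, the ordered group (G, G₊) has the strong Riesz interpolation property. -/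
/-!
Put `a = T x₁ ⊔ T x₂` and `b = T y₁ ⊓ T y₂`, so that `a < b` pointwise. Since `S` is compact,
the strict order interval `{h | a < h < b}` is open in the compact-open (= uniform) topology,
and it contains `(a + b) / 2`; the dense range of `T` therefore meets it.
-/

open Set

theorem ContinuousMap.isOpen_setOf_forall_lt {X β : Type*} [TopologicalSpace X] [CompactSpace X]
    [AddCommGroup β] [LinearOrder β] [IsOrderedAddMonoid β] [TopologicalSpace β]
    [OrderClosedTopology β] [IsTopologicalAddGroup β] (a b : C(X, β)) :
    IsOpen {h : C(X, β) | ∀ x, a x < h x ∧ h x < b x} := by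
  have hpos : IsOpen {k : C(X, β) | range k ⊆ Ioi 0} := isOpen_setOfPred_range_subset isOpen_Ioi
  convert ((hpos.preimage (continuous_sub_right a)).inter (hpos.preimage (continuous_sub_left b)))
  ext h
  simp [range_subset_iff, forall_and]

theorem denseRange_of_forall_abs_sub_lt {S ι : Type*} [TopologicalSpace S] [CompactSpace S]
    {T : ι → C(S, ℝ)} (hdense : ∀ f : C(S, ℝ), ∀ ε : ℝ, 0 < ε → ∃ i, ∀ s, |T i s - f s| < ε) :
    DenseRange T := by
  refine Metric.denseRange_iff.2 fun f ε hε => ?_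
  obtain ⟨i, hi⟩ := hdense f ε hε
  exact ⟨i, (ContinuousMap.dist_lt_iff hε).2 fun s => by rw [dist_comm]; exact hi s⟩

theorem DenseRange.exists_forall_lt_apply_lt {S ι : Type*} [TopologicalSpace S] [CompactSpace S]
    {T : ι → C(S, ℝ)} (hT : DenseRange T) {a b : C(S, ℝ)} (hab : ∀ s, a s < b s) :
    ∃ i, ∀ s, a s < T i s ∧ T i s < b s := by
  let m : C(S, ℝ) := (2⁻¹ : ℝ) • (a + b)
  have hm : ∀ s, a s < m s ∧ m s < b s := fun s => by
    simp only [m, ContinuousMap.smul_apply, ContinuousMap.add_apply, smul_eq_mul]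
    constructor <;> linarith [hab s]
  exact hT.exists_mem_open (ContinuousMap.isOpen_setOf_forall_lt a b) ⟨m, hm⟩

/-- Interpolation mechanism of Lemma 4.2(iii): if `T : G → C(S, ℝ)` has uniformly dense
image (`S` compact), then strict pointwise interpolation data in the image of `T` can be
interpolated by an element of `G`; in particular the ordered group with cone
`{x : T x > 0 on S} ∪ {0}` has the strong Riesz interpolation property. -/
theorem stmt_11 {S G : Type*} [TopologicalSpace S] [CompactSpace S] [AddCommGroup G]
    (T : G →+ C(S, ℝ))
    (hdense : ∀ f : C(S, ℝ), ∀ ε : ℝ, 0 < ε → ∃ x : G, ∀ s : S, |(T x) s - f s| < ε) :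
    ∀ x₁ x₂ y₁ y₂ : G,
      (∀ s : S, (T x₁) s < (T y₁) s) → (∀ s : S, (T x₁) s < (T y₂) s) →
      (∀ s : S, (T x₂) s < (T y₁) s) → (∀ s : S, (T x₂) s < (T y₂) s) →
      ∃ z : G, (∀ s : S, (T x₁) s < (T z) s) ∧ (∀ s : S, (T x₂) s < (T z) s) ∧
        (∀ s : S, (T z) s < (T y₁) s) ∧ (∀ s : S, (T z) s < (T y₂) s) := by
  intro x₁ x₂ y₁ y₂ h₁₁ h₁₂ h₂₁ h₂₂
  obtain ⟨z, hz⟩ := (denseRange_of_forall_abs_sub_lt hdense).exists_forall_lt_apply_lt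
    (a := T x₁ ⊔ T x₂) (b := T y₁ ⊓ T y₂) fun s => by
      simpa only [ContinuousMap.sup_apply, ContinuousMap.inf_apply, sup_lt_iff, lt_inf_iff]
        using ⟨⟨h₁₁ s, h₂₁ s⟩, h₁₂ s, h₂₂ s⟩
  simp only [ContinuousMap.sup_apply, ContinuousMap.inf_apply, sup_lt_iff, lt_inf_iff,
    forall_and] at hz
  exact ⟨z, hz.1.1, hz.1.2, hz.2.1, hz.2.2⟩
end
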